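/- arXiv:2203.05305 — 5 statements merged into one kernel-verified Lean document; each statement's English description precedes it below -/
import Mathlib

section
/- Three points x_0, x_1, x_2 in Euclidean space are affinely independent (not collinear) if and only if their Cayley–Menger determinant cm(x_0, x_1, x_2) is strictly negative. -/
/-!
Put `u = x₁ - x₀` and `v = x₂ - x₀`. Expanding the determinant and using
`‖x₁ - x₂‖² = ‖u‖² - 2⟪u, v⟫ + ‖v‖²` gives `cm(x₀, x₁, x₂) = -4 (‖u‖² ‖v‖² - ⟪u, v⟫²)`, i.e. `-4`
times the Gram determinant of `u, v`. A Gram matrix is positive semidefinite, so its determinant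
is positive exactly when it is nonsingular, that is when `u, v` are linearly independent, which
is affine independence of the three points.
-/

noncomputable section

/-- The Cayley–Menger determinant of the points `x 0, …, x (m-1)`. -/
def cayleyMenger {E : Type*} [PseudoMetricSpace E] {m : ℕ} (x : Fin m → E) : ℝ :=
  Matrix.det (Matrix.of fun i j : Option (Fin m) =>
    match i, j with
    | none, none => 0
    | none, some _ => 1
    | some _, none => 1
    | some a, some b => dist (x a) (x b) ^ 2)

open Matrix
open scoped ComplexOrder

theorem affineIndependent_iff_linearIndependent_vsub_fin {k V P : Type*} [Ring k]
    [AddCommGroup V] [Module k V] [AddTorsor V P] {m : ℕ} (p : Fin (m + 1) → P) :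
    AffineIndependent k p ↔ LinearIndependent k fun i : Fin m => p i.succ -ᵥ p 0 := by
  rw [affineIndependent_iff_linearIndependent_vsub k p 0,
    ← linearIndependent_equiv (finSuccAboveEquiv (0 : Fin (m + 1)))]
  rfl

theorem det_gram_pos_iff_linearIndependent {𝕜 E ι : Type*} [RCLike 𝕜] [NormedAddCommGroup E]
    [InnerProductSpace 𝕜 E] [Fintype ι] [DecidableEq ι] {v : ι → E} :
    0 < (gram 𝕜 v).det ↔ LinearIndependent 𝕜 v :=
  (posSemidef_gram 𝕜 v).det_nonneg.lt_iff_ne'.trans det_gram_ne_zero_iff_linearIndependent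

theorem det_cayleyMenger_fin_three {R : Type*} [CommRing R] (a b c : R) :
    !![0, 1, 1, 1; 1, 0, a, b; 1, a, 0, c; 1, b, c, 0].det =
      a ^ 2 + b ^ 2 + c ^ 2 - 2 * a * b - 2 * b * c - 2 * a * c := by
  rw [det_succ_row_zero]
  simp [Fin.sum_univ_succ, det_fin_three, Fin.succAbove]
  ring

theorem cayleyMenger_fin_three {E : Type*} [PseudoMetricSpace E] (x₀ x₁ x₂ : E) :
    cayleyMenger ![x₀, x₁, x₂] =
      !![0, 1, 1, 1;
        1, 0, dist x₀ x₁ ^ 2, dist x₀ x₂ ^ 2;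
        1, dist x₀ x₁ ^ 2, 0, dist x₁ x₂ ^ 2;
        1, dist x₀ x₂ ^ 2, dist x₁ x₂ ^ 2, 0].det := by
  rw [cayleyMenger, ← det_reindex_self (finSuccEquiv 3)]
  congr 1
  ext i j
  rcases i with _ | i <;> rcases j with _ | j <;>
    [skip; fin_cases j; fin_cases i; (fin_cases i <;> fin_cases j)] <;>
    simp [reindex_apply, dist_comm]

theorem cayleyMenger_fin_three_eq_neg_four_mul_det_gram {E : Type*} [SeminormedAddCommGroup E]
    [InnerProductSpace ℝ E] (x₀ x₁ x₂ : E) :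
    cayleyMenger ![x₀, x₁, x₂] = -4 * (gram ℝ ![x₁ - x₀, x₂ - x₀]).det := by
  have h₁₂ : dist x₁ x₂ ^ 2 = ‖x₁ - x₀‖ ^ 2 - 2 * inner ℝ (x₁ - x₀) (x₂ - x₀) + ‖x₂ - x₀‖ ^ 2 := by
    rw [dist_eq_norm, ← norm_sub_sq_real, sub_sub_sub_cancel_right]
  rw [cayleyMenger_fin_three, det_cayleyMenger_fin_three, dist_comm x₀, dist_comm x₀,
    dist_eq_norm, dist_eq_norm, h₁₂, det_fin_two]
  simp only [gram_apply, cons_val_zero, cons_val_one, real_inner_self_eq_norm_sq,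
    real_inner_comm (x₁ - x₀)]
  ring

theorem affineIndependent_iff_cayleyMenger_neg {n : ℕ}
    (x₀ x₁ x₂ : EuclideanSpace ℝ (Fin n)) :
    AffineIndependent ℝ ![x₀, x₁, x₂] ↔ cayleyMenger ![x₀, x₁, x₂] < 0 := by
  have hvsub : (fun i : Fin 2 => ![x₀, x₁, x₂] i.succ -ᵥ x₀) = ![x₁ - x₀, x₂ - x₀] := by
    ext i : 1; fin_cases i <;> rfl
  rw [affineIndependent_iff_linearIndependent_vsub_fin, cons_val_zero, hvsub,
    ← det_gram_pos_iff_linearIndependent, cayleyMenger_fin_three_eq_neg_four_mul_det_gram,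
    neg_mul, neg_lt_zero, mul_pos_iff_of_pos_left four_pos]
end
end

section
/- Four points x_0, x_1, x_2, x_3 in R^3 are affinely independent (not coplanar) if and only if their Cayley–Menger determinant cm(x_0, x_1, x_2, x_3) is strictly positive. -/
/-!
Put `a i = x (i + 1) -ᵥ x 0`. Since `dist (x (i + 1)) (x (j + 1)) ^ 2 = ‖a i‖² + ‖a j‖² - 2⟪a i, a j⟫`
and `dist (x 0) (x (i + 1)) ^ 2 = ‖a i‖²`, listing the indices as `none, 0, 1, …, n` turns the
Cayley–Menger matrix into a matrix bordered by the invertible corner `!![0, 1; 1, 0]` whose Schur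
complement is `-2 • gram a`. Hence `cayleyMenger x = (-1) ^ (n + 1) * 2 ^ n * det (gram a)`, and a
Gram determinant is nonnegative and vanishes exactly when the `a i` are linearly dependent.
-/

noncomputable section

open Matrix

def finTwoSumEquivOption (n : ℕ) : Fin 2 ⊕ Fin n ≃ Option (Fin (n + 1)) where
  toFun := Sum.elim ![none, some 0] (some ∘ Fin.succ)
  invFun o := o.elim (.inl 0) (Fin.cases (.inl 1) .inr)
  left_inv := by
    rintro (i | i)
    · fin_cases i <;> rfl
    · simp
  right_inv := by
    rintro (_ | j)
    · rfl
    · cases j using Fin.cases <;> simp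

theorem det_fromBlocks_bordered {R : Type*} [CommRing R] {n : ℕ} (u : Fin n → R)
    (G : Matrix (Fin n) (Fin n) R) :
    (fromBlocks !![0, 1; 1, 0] (of ![fun _ => 1, u]) (of ![fun _ => 1, u])ᵀ
      (of fun i j => u i + u j - 2 * G i j)).det = (-1) ^ (n + 1) * 2 ^ n * G.det := by
  have hswap : !![(0 : R), 1; 1, 0] * !![0, 1; 1, 0] = 1 := by
    simp [one_fin_two]
  let _ : Invertible !![(0 : R), 1; 1, 0] := ⟨_, hswap, hswap⟩
  have hschur : (of fun i j => u i + u j - 2 * G i j) -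
      (of ![fun _ => 1, u])ᵀ * ⅟!![(0 : R), 1; 1, 0] * of ![fun _ => 1, u] = (-2 : R) • G := by
    rw [show ⅟!![(0 : R), 1; 1, 0] = !![0, 1; 1, 0] from rfl]
    ext i j
    simp [mul_apply, Fin.sum_univ_two]
  rw [det_fromBlocks₁₁, hschur, det_smul, det_fin_two_of, Fintype.card_fin, neg_pow]
  ring

theorem affineIndependent_iff_linearIndependent_vsub_zero {k V P : Type*} [Ring k]
    [AddCommGroup V] [Module k V] [AddTorsor V P] {n : ℕ} (x : Fin (n + 1) → P) :
    AffineIndependent k x ↔ LinearIndependent k fun i : Fin n => x i.succ -ᵥ x 0 := by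
  rw [affineIndependent_iff_linearIndependent_vsub k x 0,
    ← linearIndependent_equiv (finSuccAboveEquiv (0 : Fin (n + 1)))]
  rfl

section EuclideanAffineSpace

variable {V P : Type*} [NormedAddCommGroup V] [InnerProductSpace ℝ V] [MetricSpace P]
  [NormedAddTorsor V P] {n : ℕ}

theorem dist_sq_eq_norm_vsub_sq_add_norm_vsub_sq_sub_two_mul_inner (p q o : P) :
    dist p q ^ 2 = ‖p -ᵥ o‖ ^ 2 + ‖q -ᵥ o‖ ^ 2 - 2 * inner ℝ (p -ᵥ o) (q -ᵥ o) := by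
  rw [dist_eq_norm_vsub V, ← vsub_sub_vsub_cancel_right p q o, norm_sub_sq_real]
  ring

theorem cayleyMenger_eq_det_gram (x : Fin (n + 1) → P) :
    cayleyMenger x =
      (-1) ^ (n + 1) * 2 ^ n * (gram ℝ fun i : Fin n => x i.succ -ᵥ x 0).det := by
  rw [cayleyMenger, ← det_submatrix_equiv_self (finTwoSumEquivOption n),
    ← det_fromBlocks_bordered fun i => ‖x i.succ -ᵥ x 0‖ ^ 2]
  congr 1
  ext (i | i) (j | j)
  · fin_cases i <;> fin_cases j <;> simp [finTwoSumEquivOption]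
  · fin_cases i <;> simp [finTwoSumEquivOption, dist_eq_norm_vsub' V]
  · fin_cases j <;> simp [finTwoSumEquivOption, dist_eq_norm_vsub V]
  · simp [finTwoSumEquivOption, gram_apply,
      dist_sq_eq_norm_vsub_sq_add_norm_vsub_sq_sub_two_mul_inner _ _ (x 0)]

theorem affineIndependent_iff_neg_one_pow_mul_cayleyMenger_pos (x : Fin (n + 1) → P) :
    AffineIndependent ℝ x ↔ 0 < (-1) ^ (n + 1) * cayleyMenger x := by
  have hsign : ((-1 : ℝ) ^ (n + 1)) * (-1) ^ (n + 1) = 1 := by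
    rw [← mul_pow]
    norm_num
  rw [cayleyMenger_eq_det_gram, ← mul_assoc, ← mul_assoc, hsign, one_mul,
    affineIndependent_iff_linearIndependent_vsub_zero, ← det_gram_ne_zero_iff_linearIndependent,
    mul_pos_iff_of_pos_left (by positivity), ((posSemidef_gram ℝ _).det_nonneg).lt_iff_ne']

end EuclideanAffineSpace

theorem affineIndependent_iff_cayleyMenger_pos
    (x₀ x₁ x₂ x₃ : EuclideanSpace ℝ (Fin 3)) :
    AffineIndependent ℝ ![x₀, x₁, x₂, x₃] ↔ 0 < cayleyMenger ![x₀, x₁, x₂, x₃] := by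
  rw [affineIndependent_iff_neg_one_pow_mul_cayleyMenger_pos]
  norm_num

end
end

section
/- Let V = {x_0, ..., x_5} and V' = {x_0', ..., x_5'} each be six points in R^3, and suppose A is the unique affine transformation with A(x_i) = x_i' for i = 0, 1, 2, 3, where x_0, x_1, x_2, x_3 are affinely independent and x_0', x_1', x_2', x_3' are affinely independent. Suppose that for every edge and diagonal choice of indices (i_0, i_1, i_2, i_3) appearing among the six points, vol(x'_{i_0}, x'_{i_1}, x'_{i_2}, x'_{i_3}) = |det A| · vol(x_{i_0}, x_{i_1}, x_{i_2}, x_{i_3}), and that for j = 4, 5 the points A(x_j) and x_j' lie in the same closed halfspace with respect to each of the planes aff{x_0', x_1', x_2'}, aff{x_0', x_1', x_3'}, and aff{x'_{j-4}, x_2', x_3'}. Then A(x_4) = x_4' and A(x_5) = x_5'. -/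
/-!
For a face `aff{yₐ, y_b, y_c}` of the tetrahedron `y₀y₁y₂y₃`, the signed volume of
`yₐ y_b y_c q` is an affine function of `q` vanishing on the face, hence a nonzero multiple of
the barycentric coordinate of `q` opposite that face. As `A` maps `xₐ, x_b, x_c` to the face
vertices, the volume hypothesis says this signed volume has the same absolute value at `A xⱼ`
and at `yⱼ`, and the halfspace hypothesis says it has the same sign there. So `A xⱼ` and `yⱼ`
share three barycentric coordinates, and the fourth because barycentric coordinates sum to `1`.
-/

noncomputable section

/-- The 3-dimensional volume of the tetrahedron with vertices `p 0, p 1, p 2, p 3`. -/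
def tetraVol (p : Fin 4 → EuclideanSpace ℝ (Fin 3)) : ℝ :=
  |Matrix.det (Matrix.of fun i j : Fin 3 => (p i.succ - p 0) j)| / 6

theorem AffineSubspace.WSameSide.sameRay_of_forall_eq_zero {R V P M : Type*} [CommRing R]
    [PartialOrder R] [IsStrictOrderedRing R] [AddCommGroup V] [Module R V] [AddTorsor V P]
    [AddCommGroup M] [Module R M] {S : Set P} {p q : P} (h : (affineSpan R S).WSameSide p q)
    (f : P →ᵃ[R] M) (hf : ∀ z ∈ S, f z = 0) : SameRay R (f p) (f q) := by
  have hspan : (affineSpan R S).map f ≤ affineSpan R {0} := by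
    rw [AffineSubspace.map_span]
    exact affineSpan_mono R (by rintro _ ⟨z, hz, rfl⟩; exact hf z hz)
  obtain ⟨p₁, hp₁, p₂, hp₂, hray⟩ := h.map f
  rw [(AffineSubspace.mem_affineSpan_singleton _ _).1 (hspan hp₁),
    (AffineSubspace.mem_affineSpan_singleton _ _).1 (hspan hp₂)] at hray
  simpa using hray

namespace AffineBasis

variable {ι k V P : Type*} [Fintype ι] [Ring k] [AddCommGroup V] [Module k V] [AddTorsor V P]

theorem apply_eq_coord_smul {M : Type*} [AddCommGroup M] [Module k M] (B : AffineBasis ι k P)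
    (f : P →ᵃ[k] M) {d : ι} (hf : ∀ i ≠ d, f (B i) = 0) (q : P) :
    f q = B.coord d q • f (B d) := by
  have hw := B.sum_coord_apply_eq_one q
  rw [← B.affineCombination_coord_eq_self q, Finset.map_affineCombination _ _ _ hw,
    Finset.univ.affineCombination_eq_linear_combination _ _ hw,
    Finset.sum_eq_single d (fun i _ hi => by simp [hf i hi]) (by simp),
    B.affineCombination_coord_eq_self]
  rfl

theorem ext_elem_of_forall_ne [DecidableEq ι] (B : AffineBasis ι k P) {p q : P} (j : ι)
    (h : ∀ i ≠ j, B.coord i p = B.coord i q) : p = q := by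
  refine B.ext_elem fun i => ?_
  obtain rfl | hi := eq_or_ne i j
  · have hsum := (B.sum_coord_apply_eq_one p).trans (B.sum_coord_apply_eq_one q).symm
    rwa [← Finset.add_sum_erase _ _ (Finset.mem_univ i),
      ← Finset.add_sum_erase _ _ (Finset.mem_univ i),
      Finset.sum_congr rfl fun k hk => h k (Finset.ne_of_mem_erase hk), add_left_inj] at hsum
  · exact h i hi

end AffineBasis

local notation "ℝ³" => EuclideanSpace ℝ (Fin 3)

def volForm : ℝ³ [⋀^Fin 3]→ₗ[ℝ] ℝ := (EuclideanSpace.basisFun (Fin 3) ℝ).toBasis.det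

theorem tetraVol_eq_abs_volForm (p : Fin 4 → ℝ³) :
    tetraVol p = |volForm fun i => p i.succ - p 0| / 6 := by
  rw [tetraVol, volForm, Module.Basis.det_apply, ← Matrix.det_transpose]
  rfl

theorem tetraVol_map (A : ℝ³ →ᵃ[ℝ] ℝ³) (p : Fin 4 → ℝ³) :
    tetraVol (A ∘ p) = |LinearMap.det A.linear| * tetraVol p := by
  have h : (fun i : Fin 3 => A (p i.succ) - A (p 0)) = A.linear ∘ fun i => p i.succ - p 0 := by
    funext i
    simp only [Function.comp_apply, ← vsub_eq_sub, AffineMap.linearMap_vsub]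
  simp only [tetraVol_eq_abs_volForm, Function.comp_apply]
  rw [h, volForm, Module.Basis.det_comp, abs_mul, mul_div_assoc]

theorem tetraVol_ne_zero_of_affineIndependent {p : Fin 4 → ℝ³} (hp : AffineIndependent ℝ p) :
    tetraVol p ≠ 0 := by
  have hli : LinearIndependent ℝ fun i : Fin 3 => p i.succ - p 0 :=
    ((affineIndependent_iff_linearIndependent_vsub ℝ p 0).1 hp).comp
      (fun i : Fin 3 => (⟨i.succ, i.succ_ne_zero⟩ : {j : Fin 4 // j ≠ 0}))
      fun i j h => Fin.succ_injective _ (congrArg Subtype.val h)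
  have hspan := hli.span_eq_top_of_card_eq_finrank (by simp)
  rw [tetraVol_eq_abs_volForm]
  exact div_ne_zero (abs_ne_zero.2 ((Module.Basis.is_basis_iff_det _).1 ⟨hli, hspan⟩).ne_zero)
    (by norm_num)

def signedVol (a b c : ℝ³) : ℝ³ →ᵃ[ℝ] ℝ :=
  (6⁻¹ : ℝ) • (volForm.toMultilinearMap.toLinearMap ![b - a, c - a, 0] 2).toAffineMap.comp
    ((AffineEquiv.vaddConst ℝ a).symm : ℝ³ →ᵃ[ℝ] ℝ³)

theorem signedVol_apply (a b c q : ℝ³) :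
    signedVol a b c q = volForm ![b - a, c - a, q - a] / 6 := by
  have h : Function.update ![b - a, c - a, 0] 2 (q - a) = ![b - a, c - a, q - a] := by
    funext i
    fin_cases i <;> rfl
  simp only [signedVol, AffineMap.coe_smul, AffineMap.coe_comp, Pi.smul_apply,
    Function.comp_apply, AffineEquiv.coe_toAffineMap, AffineEquiv.vaddConst_symm_apply,
    LinearMap.coe_toAffineMap, MultilinearMap.toLinearMap_apply,
    AlternatingMap.coe_multilinearMap, vsub_eq_sub, h, smul_eq_mul]
  ring

theorem tetraVol_eq_abs_signedVol (a b c q : ℝ³) :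
    tetraVol ![a, b, c, q] = |signedVol a b c q| := by
  rw [tetraVol_eq_abs_volForm, signedVol_apply, abs_div, abs_of_pos (by norm_num : (0 : ℝ) < 6)]
  congr 3
  funext i
  fin_cases i <;> rfl

theorem signedVol_apply_left (a b c : ℝ³) : signedVol a b c a = 0 := by
  rw [signedVol_apply, sub_self, volForm.map_coord_zero 2 rfl, zero_div]

theorem signedVol_apply_middle (a b c : ℝ³) : signedVol a b c b = 0 := by
  rw [signedVol_apply, volForm.map_eq_zero_of_eq _ (i := 0) (j := 2) rfl (by decide), zero_div]

theorem signedVol_apply_right (a b c : ℝ³) : signedVol a b c c = 0 := by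
  rw [signedVol_apply, volForm.map_eq_zero_of_eq _ (i := 1) (j := 2) rfl (by decide), zero_div]

theorem AffineBasis.coord_eq_of_tetraVol_eq_of_wSameSide (B : AffineBasis (Fin 4) ℝ ℝ³)
    {a b c d : Fin 4} (habcd : Function.Injective ![a, b, c, d]) {p q : ℝ³}
    (hvol : tetraVol ![B a, B b, B c, p] = tetraVol ![B a, B b, B c, q])
    (hside : (affineSpan ℝ {B a, B b, B c}).WSameSide p q) : B.coord d p = B.coord d q := by
  set f := signedVol (B a) (B b) (B c)
  have hface : ∀ z ∈ ({B a, B b, B c} : Set ℝ³), f z = 0 := by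
    rintro z (rfl | rfl | rfl)
    exacts [signedVol_apply_left .., signedVol_apply_middle .., signedVol_apply_right ..]
  have hfeq : f p = f q := (hside.sameRay_of_forall_eq_zero f hface).eq_of_norm_eq <| by
    simpa only [Real.norm_eq_abs, tetraVol_eq_abs_signedVol] using hvol
  have hcoord : ∀ z, f z = B.coord d z • f (B d) := B.apply_eq_coord_smul f fun i hi => by
    obtain ⟨k, rfl⟩ := Finite.surjective_of_injective habcd i
    fin_cases k
    exacts [hface _ (by simp), hface _ (by simp), hface _ (by simp), absurd rfl hi]
  have hfd : f (B d) ≠ 0 := by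
    have hind : AffineIndependent ℝ (FinVec.map B ![a, b, c, d]) :=
      FinVec.map_eq B _ ▸ B.ind.comp_embedding ⟨_, habcd⟩
    rw [← abs_ne_zero, ← tetraVol_eq_abs_signedVol]
    exact tetraVol_ne_zero_of_affineIndependent hind
  rw [hcoord p, hcoord q, smul_eq_mul, smul_eq_mul] at hfeq
  exact mul_right_cancel₀ hfd hfeq

theorem affineMap_eq_on_last_two_vertices_general
    (x y : Fin 6 → EuclideanSpace ℝ (Fin 3))
    (A : EuclideanSpace ℝ (Fin 3) →ᵃ[ℝ] EuclideanSpace ℝ (Fin 3))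
    (hA0 : A (x 0) = y 0) (hA1 : A (x 1) = y 1) (hA2 : A (x 2) = y 2) (hA3 : A (x 3) = y 3)
    (hy : AffineIndependent ℝ ![y 0, y 1, y 2, y 3])
    (hvol : ∀ i₀ i₁ i₂ i₃ : Fin 6,
      tetraVol ![y i₀, y i₁, y i₂, y i₃] =
        |LinearMap.det A.linear| * tetraVol ![x i₀, x i₁, x i₂, x i₃])
    (h4a : (affineSpan ℝ ({y 0, y 1, y 2} : Set (EuclideanSpace ℝ (Fin 3)))).WSameSide
      (A (x 4)) (y 4))
    (h4b : (affineSpan ℝ ({y 0, y 1, y 3} : Set (EuclideanSpace ℝ (Fin 3)))).WSameSide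
      (A (x 4)) (y 4))
    (h4c : (affineSpan ℝ ({y 0, y 2, y 3} : Set (EuclideanSpace ℝ (Fin 3)))).WSameSide
      (A (x 4)) (y 4))
    (h5a : (affineSpan ℝ ({y 0, y 1, y 2} : Set (EuclideanSpace ℝ (Fin 3)))).WSameSide
      (A (x 5)) (y 5))
    (h5b : (affineSpan ℝ ({y 0, y 1, y 3} : Set (EuclideanSpace ℝ (Fin 3)))).WSameSide
      (A (x 5)) (y 5))
    (h5c : (affineSpan ℝ ({y 1, y 2, y 3} : Set (EuclideanSpace ℝ (Fin 3)))).WSameSide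
      (A (x 5)) (y 5)) :
    A (x 4) = y 4 ∧ A (x 5) = y 5 := by
  let B : AffineBasis (Fin 4) ℝ ℝ³ :=
    ⟨_, hy, hy.affineSpan_eq_top_iff_card_eq_finrank_add_one.2 (by simp)⟩
  have hvol_face {i₀ i₁ i₂ : Fin 6} (j : Fin 6) (h₀ : A (x i₀) = y i₀)
      (h₁ : A (x i₁) = y i₁) (h₂ : A (x i₂) = y i₂) :
      tetraVol ![y i₀, y i₁, y i₂, A (x j)] = tetraVol ![y i₀, y i₁, y i₂, y j] := by
    calc tetraVol ![y i₀, y i₁, y i₂, A (x j)]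
        = tetraVol (FinVec.map A ![x i₀, x i₁, x i₂, x j]) := by
          rw [← h₀, ← h₁, ← h₂]; rfl
      _ = tetraVol ![y i₀, y i₁, y i₂, y j] := by rw [FinVec.map_eq, tetraVol_map, hvol]
  refine ⟨B.ext_elem_of_forall_ne 0 fun d hd => ?_, B.ext_elem_of_forall_ne 1 fun d hd => ?_⟩
  · fin_cases d
    · exact absurd rfl hd
    · exact B.coord_eq_of_tetraVol_eq_of_wSameSide (a := 0) (b := 2) (c := 3) (by decide)
        (hvol_face 4 hA0 hA2 hA3) h4c
    · exact B.coord_eq_of_tetraVol_eq_of_wSameSide (a := 0) (b := 1) (c := 3) (by decide)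
        (hvol_face 4 hA0 hA1 hA3) h4b
    · exact B.coord_eq_of_tetraVol_eq_of_wSameSide (a := 0) (b := 1) (c := 2) (by decide)
        (hvol_face 4 hA0 hA1 hA2) h4a
  · fin_cases d
    · exact B.coord_eq_of_tetraVol_eq_of_wSameSide (a := 1) (b := 2) (c := 3) (by decide)
        (hvol_face 5 hA1 hA2 hA3) h5c
    · exact absurd rfl hd
    · exact B.coord_eq_of_tetraVol_eq_of_wSameSide (a := 0) (b := 1) (c := 3) (by decide)
        (hvol_face 5 hA0 hA1 hA3) h5b
    · exact B.coord_eq_of_tetraVol_eq_of_wSameSide (a := 0) (b := 1) (c := 2) (by decide)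
        (hvol_face 5 hA0 hA1 hA2) h5a

/-- If the affine map `A` carries `x₀,…,x₃` to `y₀,…,y₃` (both quadruples affinely
independent), all tetrahedra spanned by the `y`'s have `|det A|` times the volume of the
corresponding tetrahedra spanned by the `x`'s, and for `j = 4, 5` the points `A (x j)` and
`y j` lie in the same closed halfspace with respect to each of the three planes
`aff{y₀,y₁,y₂}`, `aff{y₀,y₁,y₃}`, `aff{y_{j-4},y₂,y₃}`, then `A (x 4) = y 4` and
`A (x 5) = y 5`. -/
theorem affineMap_eq_on_last_two_vertices
    (x y : Fin 6 → EuclideanSpace ℝ (Fin 3))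
    (A : EuclideanSpace ℝ (Fin 3) →ᵃ[ℝ] EuclideanSpace ℝ (Fin 3))
    (hA0 : A (x 0) = y 0) (hA1 : A (x 1) = y 1) (hA2 : A (x 2) = y 2) (hA3 : A (x 3) = y 3)
    (hx : AffineIndependent ℝ ![x 0, x 1, x 2, x 3])
    (hy : AffineIndependent ℝ ![y 0, y 1, y 2, y 3])
    (hvol : ∀ i₀ i₁ i₂ i₃ : Fin 6,
      tetraVol ![y i₀, y i₁, y i₂, y i₃] =
        |LinearMap.det A.linear| * tetraVol ![x i₀, x i₁, x i₂, x i₃])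
    (h4a : (affineSpan ℝ ({y 0, y 1, y 2} : Set (EuclideanSpace ℝ (Fin 3)))).WSameSide
      (A (x 4)) (y 4))
    (h4b : (affineSpan ℝ ({y 0, y 1, y 3} : Set (EuclideanSpace ℝ (Fin 3)))).WSameSide
      (A (x 4)) (y 4))
    (h4c : (affineSpan ℝ ({y 0, y 2, y 3} : Set (EuclideanSpace ℝ (Fin 3)))).WSameSide
      (A (x 4)) (y 4))
    (h5a : (affineSpan ℝ ({y 0, y 1, y 2} : Set (EuclideanSpace ℝ (Fin 3)))).WSameSide
      (A (x 5)) (y 5))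
    (h5b : (affineSpan ℝ ({y 0, y 1, y 3} : Set (EuclideanSpace ℝ (Fin 3)))).WSameSide
      (A (x 5)) (y 5))
    (h5c : (affineSpan ℝ ({y 1, y 2, y 3} : Set (EuclideanSpace ℝ (Fin 3)))).WSameSide
      (A (x 5)) (y 5)) :
    A (x 4) = y 4 ∧ A (x 5) = y 5 :=
  affineMap_eq_on_last_two_vertices_general x y A hA0 hA1 hA2 hA3 hy hvol h4a h4b h4c h5a h5b h5c
end
end

section
/- Let x_0, ..., x_5 be six points in R^3 such that for each of the 8 triangles F of the octahedral combinatorial structure (faces {025}, {052} etc. of the regular octahedron with vertex labels as in a standard antipodal pairing x_0–x_5, x_1–x_4, x_2–x_3), the three vertices not in F lie strictly on one side of the plane aff F and F has affinely independent vertices. Then the convex hull of {x_0, ..., x_5} is a convex polytope whose faces are exactly the 8 triangles, i.e., each such triangle ⟨x_i, x_j, x_k⟩ is a face (2-dimensional) of conv{x_0, ..., x_5}. -/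
noncomputable section

/-- The 8 faces of the octahedral combinatorial structure on labels `{0,…,5}` with
antipodal pairs `(0,5)`, `(1,4)`, `(2,3)`: the triples containing no antipodal pair. -/
def octFaces : List (Fin 6 × Fin 6 × Fin 6) :=
  [(0, 1, 2), (0, 1, 3), (0, 4, 2), (0, 4, 3), (5, 1, 2), (5, 1, 3), (5, 4, 2), (5, 4, 3)]

/-- Six points in `ℝ³` form a convex octahedron (with the standard octahedral
combinatorics) if each face has affinely independent vertices and, for each face,
the three vertices not on the face lie strictly on one side of its plane. -/
def IsConvexOctahedron (x : Fin 6 → EuclideanSpace ℝ (Fin 3)) : Prop :=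
  ∀ f ∈ octFaces,
    AffineIndependent ℝ ![x f.1, x f.2.1, x f.2.2] ∧
    ∀ m m' : Fin 6, m ∉ ({f.1, f.2.1, f.2.2} : Set (Fin 6)) →
      m' ∉ ({f.1, f.2.1, f.2.2} : Set (Fin 6)) →
      (affineSpan ℝ ({x f.1, x f.2.1, x f.2.2} : Set (EuclideanSpace ℝ (Fin 3)))).SSameSide
        (x m) (x m')

/-! For each face `F`, the plane `aff F` is a level set `{w = c}` of a nonzero functional, and the
orientation of `w` can be chosen so that the three other vertices, all on one side, satisfy
`w < c`. Then `w ≤ c` on the hull, and a convex combination of the vertices attains `c` only when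
all of its weight sits on `F`, so the hull meets `{w = c}` exactly in `conv F`. -/

open Finset Module

theorem AffineSubspace.exists_ne_zero_mem_iff_apply_eq {K V : Type*} [Field K] [AddCommGroup V]
    [Module K V] [FiniteDimensional K V] {s : AffineSubspace K V} {p₀ : V} (hp₀ : p₀ ∈ s)
    (hs : finrank K s.direction + 1 = finrank K V) :
    ∃ f : V →ₗ[K] K, f ≠ 0 ∧ ∀ p, p ∈ s ↔ f p = f p₀ := by
  have hlt : s.direction < ⊤ := lt_top_iff_ne_top.2 fun h => by
    rw [h, finrank_top] at hs
    omega
  obtain ⟨f, hf, hle⟩ := s.direction.exists_le_ker_of_lt_top hlt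
  have hker : s.direction = LinearMap.ker f :=
    Submodule.eq_of_le_of_finrank_eq hle (by
      have := Module.Dual.finrank_ker_add_one_of_ne_zero hf
      omega)
  refine ⟨f, hf, fun p => ?_⟩
  rw [← vsub_right_mem_direction_iff_mem hp₀, hker, LinearMap.mem_ker, vsub_eq_sub, map_sub,
    sub_eq_zero]

section OrderedField

variable {𝕜 V : Type*} [Field 𝕜] [LinearOrder 𝕜] [IsStrictOrderedRing 𝕜]
  [AddCommGroup V] [Module 𝕜 V]

theorem convexHull_sep_eq_convexHull_sep_of_le {s : Set V} {f : V →ₗ[𝕜] 𝕜} {c : 𝕜}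
    (hs : ∀ q ∈ s, f q ≤ c) :
    {p ∈ convexHull 𝕜 s | f p = c} = convexHull 𝕜 {q ∈ s | f q = c} := by
  refine subset_antisymm ?_ fun p hp =>
    ⟨convexHull_mono (Set.sep_subset _ _) hp,
      convexHull_min (fun q hq => hq.2) (convex_hyperplane f.isLinear c) hp⟩
  rintro p ⟨hp, hpc⟩
  obtain ⟨ι, _, a, z, ha0, ha1, hz, rfl⟩ := mem_convexHull_iff_exists_fintype.mp hp
  have hslack : ∀ i ∈ univ, 0 ≤ a i * (c - f (z i)) :=
    fun i _ => mul_nonneg (ha0 i) (sub_nonneg.2 (hs _ (hz i)))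
  have hsum : ∑ i, a i * (c - f (z i)) = 0 := by
    simp only [map_sum, map_smul, smul_eq_mul] at hpc
    simp only [mul_sub, sum_sub_distrib, ← sum_mul, ha1, one_mul, hpc, sub_self]
  have htight : ∀ i, a i ≠ 0 → f (z i) = c := fun i hi =>
    (sub_eq_zero.1 ((mul_eq_zero.1 ((sum_eq_zero_iff_of_nonneg hslack).1 hsum i
      (mem_univ i))).resolve_left hi)).symm
  classical
  rw [← centerMass_eq_of_sum_1 _ _ ha1, ← centerMass_filter_ne_zero]
  refine centerMass_mem_convexHull _ (fun i _ => ha0 i) ?_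
    fun i hi => ⟨hz i, htight i (mem_filter.1 hi).2⟩
  rw [sum_filter_ne_zero, ha1]
  exact one_pos

theorem AffineSubspace.SSameSide.apply_lt_of_lt {s : AffineSubspace 𝕜 V} {f : V →ₗ[𝕜] 𝕜}
    {c : 𝕜} (hf : ∀ p, p ∈ s ↔ f p = c) {x y : V} (h : s.SSameSide x y) (hx : f x < c) :
    f y < c := by
  obtain ⟨⟨p₁, hp₁, p₂, hp₂, hray⟩, -, hy⟩ := h
  have hray' := hray.map f
  simp only [vsub_eq_sub, map_sub, (hf _).1 hp₁, (hf _).1 hp₂] at hray'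
  obtain ⟨r₁, r₂, hr₁, hr₂, hr⟩ :=
    hray'.exists_pos (sub_ne_zero.2 hx.ne) (sub_ne_zero.2 fun h => hy ((hf y).2 h))
  simp only [smul_eq_mul] at hr
  nlinarith [mul_neg_of_pos_of_neg hr₁ (sub_neg.2 hx)]

theorem exists_apply_eq_and_lt_of_sSameSide {ι : Type*} (x : ι → V) {S : Set ι}
    {s : AffineSubspace 𝕜 V} {f : V →ₗ[𝕜] 𝕜} {c : 𝕜} (hf0 : f ≠ 0) (hf : ∀ p, p ∈ s ↔ f p = c)
    (hS : ∀ i ∈ S, x i ∈ s)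
    (hside : ∀ m m', m ∉ S → m' ∉ S → s.SSameSide (x m) (x m')) :
    ∃ (g : V →ₗ[𝕜] 𝕜) (d : 𝕜), g ≠ 0 ∧ (∀ i ∈ S, g (x i) = d) ∧ ∀ i ∉ S, g (x i) < d := by
  by_cases hbelow : ∃ m ∉ S, f (x m) < c
  · obtain ⟨m, hm, hlt⟩ := hbelow
    exact ⟨f, c, hf0, fun i hi => (hf _).1 (hS i hi),
      fun i hi => (hside m i hm hi).apply_lt_of_lt hf hlt⟩
  · push Not at hbelow
    refine ⟨-f, -c, neg_ne_zero.2 hf0, fun i hi => by simp [(hf _).1 (hS i hi)], fun i hi => ?_⟩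
    have hne : f (x i) ≠ c := fun h => (hside i i hi hi).2.1 ((hf _).2 h)
    simpa using (hbelow i hi).lt_of_ne' hne

theorem convexHull_range_sep_eq_convexHull_image {ι : Type*} (x : ι → V) {S : Set ι}
    {g : V →ₗ[𝕜] 𝕜} {d : 𝕜} (hS : ∀ i ∈ S, g (x i) = d) (hlt : ∀ i ∉ S, g (x i) < d) :
    (∀ p ∈ convexHull 𝕜 (Set.range x), g p ≤ d) ∧
      {p ∈ convexHull 𝕜 (Set.range x) | g p = d} = convexHull 𝕜 (x '' S) := by
  have hle : ∀ q ∈ Set.range x, g q ≤ d := by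
    rintro _ ⟨i, rfl⟩
    by_cases hi : i ∈ S
    exacts [(hS i hi).le, (hlt i hi).le]
  refine ⟨fun p hp => convexHull_min hle (convex_halfSpace_le g.isLinear d) hp, ?_⟩
  rw [convexHull_sep_eq_convexHull_sep_of_le hle]
  congr 1
  ext q
  constructor
  · rintro ⟨⟨i, rfl⟩, hi⟩
    exact ⟨i, by_contra fun h => (hlt i h).ne hi, rfl⟩
  · rintro ⟨i, hi, rfl⟩
    exact ⟨⟨i, rfl⟩, hS i hi⟩

end OrderedField

/-- If six points in ℝ³ satisfy the convex-octahedron conditions, then each of the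
8 combinatorial triangles is a (2-dimensional) face of the convex hull of the six points,
i.e. is cut out by a supporting hyperplane. -/
theorem octahedron_faces_are_faces (x : Fin 6 → EuclideanSpace ℝ (Fin 3))
    (hx : IsConvexOctahedron x) :
    ∀ f ∈ octFaces, ∃ (w : EuclideanSpace ℝ (Fin 3) →ₗ[ℝ] ℝ) (c : ℝ),
      w ≠ 0 ∧
      (∀ p ∈ convexHull ℝ (Set.range x), w p ≤ c) ∧
      {p ∈ convexHull ℝ (Set.range x) | w p = c} =
        convexHull ℝ ({x f.1, x f.2.1, x f.2.2} : Set (EuclideanSpace ℝ (Fin 3))) := by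
  intro f hf
  obtain ⟨hind, hside⟩ := hx f hf
  set s := affineSpan ℝ ({x f.1, x f.2.1, x f.2.2} : Set (EuclideanSpace ℝ (Fin 3)))
  have hcodim : finrank ℝ s.direction + 1 = finrank ℝ (EuclideanSpace ℝ (Fin 3)) := by
    have hrange : Set.range ![x f.1, x f.2.1, x f.2.2] = {x f.1, x f.2.1, x f.2.2} := by
      rw [Matrix.range_cons, Matrix.range_cons_cons_empty, Set.singleton_union]
    rw [direction_affineSpan, ← hrange, hind.finrank_vectorSpan (Fintype.card_fin _),
      finrank_euclideanSpace_fin]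
  obtain ⟨g, hg0, hgs⟩ :=
    s.exists_ne_zero_mem_iff_apply_eq (mem_affineSpan ℝ (Set.mem_insert _ _)) hcodim
  have hface : ∀ i ∈ ({f.1, f.2.1, f.2.2} : Set (Fin 6)), x i ∈ s := by
    rintro i (rfl | rfl | rfl) <;> exact mem_affineSpan ℝ (by simp)
  obtain ⟨w, c, hw0, hwS, hwlt⟩ := exists_apply_eq_and_lt_of_sSameSide x hg0 hgs hface hside
  obtain ⟨hsupp, hsep⟩ := convexHull_range_sep_eq_convexHull_image x hwS hwlt
  refine ⟨w, c, hw0, hsupp, ?_⟩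
  rw [hsep, Set.image_insert_eq, Set.image_insert_eq, Set.image_singleton]
end
end

section
/- If F is a triangle with affinely independent vertices contained in a finite point set S ⊂ R^3 such that all points of S not in F lie in one open halfspace determined by aff F, then conv F is a face of the polytope conv S, and every vertex of F is a vertex (extreme point) of conv S. -/
/-!
The plane `aff{a, b, c}` is a level set `{w = c₀}` of a nonzero linear functional, and the sign of
`w` can be chosen so that every other point of `S` lies in `{w < c₀}`. Then `w ≤ c₀` on `conv S`,
and a convex combination of points of `S` attains `c₀` only if it uses the points of the level set
alone, which are `a, b, c`. The same remark shows that a vertex, say `a`, cannot lie in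
`conv (S \ {a})`: it would lie in `conv {b, c}`, contradicting affine independence; and a point of
`S` outside the hull of the others is an extreme point of `conv S`.
-/

open Set

theorem AffineSubspace.exists_linearMap_mem_iff {K V : Type*} [Field K] [AddCommGroup V]
    [Module K V] [FiniteDimensional K V] (s : AffineSubspace K V)
    (hs : Module.finrank K s.direction + 1 = Module.finrank K V) {x : V} (hx : x ∈ s) :
    ∃ w : V →ₗ[K] K, w ≠ 0 ∧ ∀ y, y ∈ s ↔ w y = w x := by
  obtain ⟨w, hw0, hle⟩ :=
    s.direction.exists_le_ker_of_lt_top (Submodule.lt_top_of_finrank_lt_finrank (by omega))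
  have hker : s.direction = LinearMap.ker w := Submodule.eq_of_le_of_finrank_eq hle
    (by have := Module.Dual.finrank_ker_add_one_of_ne_zero hw0; omega)
  refine ⟨w, hw0, fun y => ?_⟩
  rw [← vsub_right_mem_direction_iff_mem hx, hker, LinearMap.mem_ker, vsub_eq_sub, map_sub,
    sub_eq_zero]

theorem AffineSubspace.SSameSide.lt_iff_lt {V : Type*} [AddCommGroup V] [Module ℝ V]
    {s : AffineSubspace ℝ V} {w : V →ₗ[ℝ] ℝ} {c : ℝ} (hs : ∀ y, y ∈ s ↔ w y = c) {x y : V}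
    (h : s.SSameSide x y) : w x < c ↔ w y < c := by
  obtain ⟨⟨p₁, hp₁, p₂, hp₂, hray⟩, hx, hy⟩ := h
  have hray' : SameRay ℝ (w x - c) (w y - c) := by
    simpa [(hs p₁).1 hp₁, (hs p₂).1 hp₂] using hray.map w
  have hxc : w x - c ≠ 0 := sub_ne_zero.2 fun h => hx ((hs x).2 h)
  have hyc : w y - c ≠ 0 := sub_ne_zero.2 fun h => hy ((hs y).2 h)
  obtain ⟨r₁, r₂, hr₁, hr₂, hr⟩ := hray'.exists_pos hxc hyc
  rw [smul_eq_mul, smul_eq_mul] at hr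
  constructor <;> intro <;> nlinarith

theorem AffineSubspace.exists_linearMap_mem_iff_forall_lt {V : Type*} [AddCommGroup V]
    [Module ℝ V] [FiniteDimensional ℝ V] (s : AffineSubspace ℝ V)
    (hs : Module.finrank ℝ s.direction + 1 = Module.finrank ℝ V) {x : V} (hx : x ∈ s)
    {T : Set V} (hT : ∀ p ∈ T, ∀ q ∈ T, s.SSameSide p q) :
    ∃ w : V →ₗ[ℝ] ℝ, w ≠ 0 ∧ (∀ y, y ∈ s ↔ w y = w x) ∧ ∀ p ∈ T, w p < w x := by
  obtain ⟨w, hw0, hmem⟩ := s.exists_linearMap_mem_iff hs hx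
  have hne : ∀ p ∈ T, w p ≠ w x := fun p hp h => (hT p hp p hp).left_notMem ((hmem p).2 h)
  by_cases hflip : ∃ q ∈ T, w x < w q
  · obtain ⟨q, hq, hwq⟩ := hflip
    refine ⟨-w, neg_ne_zero.2 hw0, fun y => by simp [hmem y], fun p hp => ?_⟩
    have hside := (hT p hp q hq).lt_iff_lt hmem
    simp only [LinearMap.neg_apply, neg_lt_neg_iff]
    exact (hne p hp).symm.lt_of_le (not_lt.1 fun h => hwq.not_gt (hside.1 h))
  · push Not at hflip
    exact ⟨w, hw0, hmem, fun p hp => (hflip p hp).lt_of_ne (hne p hp)⟩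

variable {E : Type*} [AddCommGroup E] [Module ℝ E]

theorem sep_convexHull_eq_convexHull_sep {T : Set E} {w : E →ₗ[ℝ] ℝ} {c : ℝ}
    (hT : ∀ x ∈ T, w x ≤ c) : {x ∈ convexHull ℝ T | w x = c} = convexHull ℝ {x ∈ T | w x = c} := by
  refine Subset.antisymm ?_ (convexHull_min (fun x hx => ⟨subset_convexHull ℝ T hx.1, hx.2⟩)
    ((convex_convexHull ℝ T).inter (convex_hyperplane w.isLinear c)))
  rintro _ ⟨hp, hwp⟩
  obtain ⟨ι, t, f, z, hf, hsum, hz, rfl⟩ := (convexHull_eq T).subset hp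
  have hterm : ∀ i ∈ t, f i * w (z i) = f i * c := by
    refine (Finset.sum_eq_sum_iff_of_le fun i hi =>
      mul_le_mul_of_nonneg_left (hT _ (hz i hi)) (hf i hi)).1 ?_
    rw [← Finset.sum_mul, hsum, one_mul, ← hwp, Finset.centerMass_eq_of_sum_1 _ _ hsum, map_sum]
    simp only [map_smul, smul_eq_mul]
  rw [← Finset.centerMass_filter_ne_zero]
  refine Finset.centerMass_mem_convexHull _ (fun i hi => hf i (Finset.mem_filter.1 hi).1)
    (by rw [Finset.sum_filter_ne_zero, hsum]; exact one_pos) fun i hi => ?_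
  obtain ⟨hit, hfi⟩ := Finset.mem_filter.1 hi
  exact ⟨hz i hit, mul_left_cancel₀ hfi (hterm i hit)⟩

theorem mem_extremePoints_convexHull_of_notMem_convexHull_sdiff {s : Set E} {x : E}
    (hx : x ∈ s) (h : x ∉ convexHull ℝ (s \ {x})) : x ∈ (convexHull ℝ s).extremePoints ℝ := by
  rcases (s \ {x}).eq_empty_or_nonempty with hempty | hne
  · have hs : s = {x} := subset_antisymm (sdiff_eq_empty.1 hempty) (singleton_subset_iff.2 hx)
    simp [hs]
  have hjoin : convexHull ℝ s = convexJoin ℝ {x} (convexHull ℝ (s \ {x})) := by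
    rw [← convexHull_insert hne, insert_sdiff_singleton, insert_eq_of_mem hx]
  refine ⟨subset_convexHull ℝ s hx, fun x₁ hx₁ x₂ hx₂ ⟨θ₁, θ₂, hθ₁, hθ₂, hθ, hxθ⟩ => ?_⟩
  rw [hjoin, convexJoin_singleton_left, mem_iUnion₂] at hx₁ hx₂
  obtain ⟨y₁, hy₁, a₁, b₁, -, hb₁, hab₁, rfl⟩ := hx₁
  obtain ⟨y₂, hy₂, a₂, b₂, -, hb₂, hab₂, rfl⟩ := hx₂
  obtain rfl := eq_sub_of_add_eq hab₁
  obtain rfl := eq_sub_of_add_eq hab₂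
  obtain rfl := eq_sub_of_add_eq' hθ
  set t := θ₁ * b₁ + (1 - θ₁) * b₂
  have hxt : t • x = (θ₁ * b₁) • y₁ + ((1 - θ₁) * b₂) • y₂ := by
    linear_combination (norm := module) -hxθ
  rcases (add_nonneg (mul_nonneg hθ₁.le hb₁) (mul_nonneg hθ₂.le hb₂)).eq_or_lt with ht0 | ht0
  · obtain rfl : b₁ = 0 := by nlinarith [mul_nonneg hθ₂.le hb₂]
    simp
  · -- otherwise solving `hxt` for `x` puts it in `convexHull ℝ (s \ {x})`
    refine absurd ?_ h
    have hmem : (t⁻¹ * (θ₁ * b₁)) • y₁ + (t⁻¹ * ((1 - θ₁) * b₂)) • y₂ ∈ convexHull ℝ (s \ {x}) :=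
      convex_convexHull ℝ _ hy₁ hy₂ (by positivity) (by positivity)
        (by rw [← mul_add, inv_mul_cancel₀ ht0.ne'])
    rwa [mul_smul t⁻¹, mul_smul t⁻¹, ← smul_add, ← hxt, inv_smul_smul₀ ht0.ne'] at hmem

theorem AffineIndependent.mem_extremePoints_convexHull {ι : Type*} {S : Set E}
    {w : E →ₗ[ℝ] ℝ} {c : ℝ} {p : ι → E} (hp : AffineIndependent ℝ p) (hS : ∀ x ∈ S, w x ≤ c)
    (hface : {x ∈ S | w x = c} = range p) (i : ι) :
    p i ∈ (convexHull ℝ S).extremePoints ℝ := by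
  obtain ⟨hpS, hwp⟩ : p i ∈ {x ∈ S | w x = c} := hface ▸ mem_range_self i
  refine mem_extremePoints_convexHull_of_notMem_convexHull_sdiff hpS fun hmem => ?_
  have hsub : {x ∈ S \ {p i} | w x = c} ⊆ p '' (univ \ {i}) := by
    rintro x ⟨⟨hxS, hxi⟩, hwx⟩
    obtain ⟨j, rfl⟩ : x ∈ range p := hface ▸ ⟨hxS, hwx⟩
    exact ⟨j, ⟨mem_univ j, fun hj => hxi (congrArg p hj)⟩, rfl⟩
  have hmem' : p i ∈ convexHull ℝ {x ∈ S \ {p i} | w x = c} := by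
    rw [← sep_convexHull_eq_convexHull_sep fun x hx => hS x hx.1]
    exact ⟨hmem, hwp⟩
  exact hp.notMem_affineSpan_sdiff i univ
    (convexHull_subset_affineSpan _ (convexHull_mono hsub hmem'))

theorem triangle_face_of_convexHull_general
    (S : Set (EuclideanSpace ℝ (Fin 3)))
    (a b c : EuclideanSpace ℝ (Fin 3))
    (habc : AffineIndependent ℝ ![a, b, c])
    (haS : a ∈ S) (hbS : b ∈ S) (hcS : c ∈ S)
    (hside : ∀ p ∈ S, ∀ q ∈ S, p ∉ ({a, b, c} : Set (EuclideanSpace ℝ (Fin 3))) →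
      q ∉ ({a, b, c} : Set (EuclideanSpace ℝ (Fin 3))) →
      (affineSpan ℝ ({a, b, c} : Set (EuclideanSpace ℝ (Fin 3)))).SSameSide p q) :
    (∃ (w : EuclideanSpace ℝ (Fin 3) →ₗ[ℝ] ℝ) (c₀ : ℝ),
        w ≠ 0 ∧
        (∀ p ∈ convexHull ℝ S, w p ≤ c₀) ∧
        {p ∈ convexHull ℝ S | w p = c₀} =
          convexHull ℝ ({a, b, c} : Set (EuclideanSpace ℝ (Fin 3)))) ∧
      a ∈ Set.extremePoints ℝ (convexHull ℝ S) ∧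
      b ∈ Set.extremePoints ℝ (convexHull ℝ S) ∧
      c ∈ Set.extremePoints ℝ (convexHull ℝ S) := by
  have hrange : range ![a, b, c] = {a, b, c} := by
    rw [Matrix.range_cons, Matrix.range_cons, Matrix.range_cons, Matrix.range_empty,
      union_empty, singleton_union, singleton_union]
  have hdim : Module.finrank ℝ (affineSpan ℝ ({a, b, c} : Set _)).direction + 1 =
      Module.finrank ℝ (EuclideanSpace ℝ (Fin 3)) := by
    rw [direction_affineSpan, ← hrange, habc.finrank_vectorSpan (n := 2) rfl,
      finrank_euclideanSpace_fin]
  obtain ⟨w, hw0, hplane, hlt⟩ := (affineSpan ℝ _).exists_linearMap_mem_iff_forall_lt hdim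
    (mem_affineSpan ℝ (mem_insert a _)) (T := S \ {a, b, c})
    fun p hp q hq => hside p hp.1 q hq.1 hp.2 hq.2
  have hface : {x ∈ S | w x = w a} = range ![a, b, c] := by
    rw [hrange]
    refine Subset.antisymm (fun x ⟨hxS, hx⟩ => ?_) fun x hx => ?_
    · by_contra hxabc
      exact (hlt x ⟨hxS, hxabc⟩).ne hx
    · exact ⟨by rcases hx with rfl | rfl | rfl <;> assumption,
        (hplane x).1 (subset_affineSpan ℝ _ hx)⟩
  have hle : ∀ x ∈ S, w x ≤ w a := fun x hx => by
    by_cases hxabc : x ∈ ({a, b, c} : Set _)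
    · exact ((hface.trans hrange).superset hxabc).2.le
    · exact (hlt x ⟨hx, hxabc⟩).le
  refine ⟨⟨w, w a, hw0, fun p hp => convexHull_min hle (convex_halfSpace_le w.isLinear _) hp,
    by rw [sep_convexHull_eq_convexHull_sep hle, hface, hrange]⟩, ?_, ?_, ?_⟩
  exacts [habc.mem_extremePoints_convexHull hle hface 0,
    habc.mem_extremePoints_convexHull hle hface 1, habc.mem_extremePoints_convexHull hle hface 2]

/-- If a triangle `⟨a,b,c⟩` with affinely independent vertices is contained in a finite
set `S ⊂ ℝ³` and all points of `S` not among `a,b,c` lie strictly on one side of the plane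
`aff{a,b,c}`, then `conv{a,b,c}` is a face of `conv S` (cut out by a supporting
hyperplane) and `a`, `b`, `c` are extreme points of `conv S`. -/
theorem triangle_face_of_convexHull
    (S : Set (EuclideanSpace ℝ (Fin 3))) (hS : S.Finite)
    (a b c : EuclideanSpace ℝ (Fin 3))
    (habc : AffineIndependent ℝ ![a, b, c])
    (haS : a ∈ S) (hbS : b ∈ S) (hcS : c ∈ S)
    (hside : ∀ p ∈ S, ∀ q ∈ S, p ∉ ({a, b, c} : Set (EuclideanSpace ℝ (Fin 3))) →
      q ∉ ({a, b, c} : Set (EuclideanSpace ℝ (Fin 3))) →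
      (affineSpan ℝ ({a, b, c} : Set (EuclideanSpace ℝ (Fin 3)))).SSameSide p q) :
    (∃ (w : EuclideanSpace ℝ (Fin 3) →ₗ[ℝ] ℝ) (c₀ : ℝ),
        w ≠ 0 ∧
        (∀ p ∈ convexHull ℝ S, w p ≤ c₀) ∧
        {p ∈ convexHull ℝ S | w p = c₀} =
          convexHull ℝ ({a, b, c} : Set (EuclideanSpace ℝ (Fin 3)))) ∧
      a ∈ Set.extremePoints ℝ (convexHull ℝ S) ∧
      b ∈ Set.extremePoints ℝ (convexHull ℝ S) ∧
      c ∈ Set.extremePoints ℝ (convexHull ℝ S) :=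
  triangle_face_of_convexHull_general S a b c habc haS hbS hcS hside
end
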